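/- Let f, g ∈ C²(I) with g > 0, f/g strictly increasing, and gf′ − fg′ nowhere vanishing. Then the residuum of the Bajraktarević mean B_{f,g} is ξ_{B_{f,g}}(x) = (g(x)f″(x) − f(x)g″(x)) / (g(x)f′(x) − f(x)g′(x)) for all x ∈ I. -/

import Mathlib

lemma bajr_aux (p : ℕ) (hp : 2 ≤ p) (I : Set ℝ) (hIopen : IsOpen I)
    (f g : ℝ → ℝ)
    (hfC : ContDiffOn ℝ 2 f I) (hgC : ContDiffOn ℝ 2 g I)
    (hg : ∀ x ∈ I, 0 < g x)
    (hmono : StrictMonoOn (fun x => f x / g x) I)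
    (hW : ∀ x ∈ I, g x * deriv f x - f x * deriv g x ≠ 0)
    (B : (Fin p → ℝ) → ℝ)
    (hB : ∀ y : Fin p → ℝ, (∀ i, y i ∈ I) →
      B y ∈ I ∧ f (B y) * (∑ i, g (y i)) = g (B y) * (∑ i, f (y i)))
    (U : Set (Fin p → ℝ)) (hU : IsOpen U) (hdiag : ∀ x ∈ I, (fun _ => x) ∈ U)
    (hC2B : ContDiffOn ℝ 2 B U)
    (i0 i1 : Fin p) (hne : i0 ≠ i1) (x : ℝ) (hx : x ∈ I) :
    -(p : ℝ)^2 * fderiv ℝ (fun z => fderiv ℝ B z (Pi.single i1 1))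
        (fun _ => x) (Pi.single i0 1)
    = (g x * deriv (deriv f) x - f x * deriv (deriv g) x)
        / (g x * deriv f x - f x * deriv g x) := by
  set w : Fin p → ℝ := fun _ => x with hw
  set e0 : Fin p → ℝ := Pi.single i0 1 with he0
  set e1 : Fin p → ℝ := Pi.single i1 1 with he1
  have hp0 : (0:ℝ) < (p:ℝ) := by exact_mod_cast (by omega : 0 < p)
  have hWx := hW x hx
  -- coordinates of the perturbed point
  have hy0 : ∀ s t : ℝ, (w + s • e0 + t • e1) i0 = x + s := by
    intro s t
    simp [he0, he1, hw, Pi.single_eq_same, Pi.single_eq_of_ne hne.symm,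
      Pi.single_eq_of_ne hne]
  have hy1 : ∀ s t : ℝ, (w + s • e0 + t • e1) i1 = x + t := by
    intro s t
    simp [he0, he1, hw, Pi.single_eq_same, Pi.single_eq_of_ne hne.symm,
      Pi.single_eq_of_ne hne]
  have hyo : ∀ (s t : ℝ) (i : Fin p), i ≠ i0 → i ≠ i1 → (w + s • e0 + t • e1) i = x := by
    intro s t i h0 h1
    simp [he0, he1, hw, Pi.single_eq_of_ne h0, Pi.single_eq_of_ne h1]
  have hw00 : w + (0:ℝ) • e0 + (0:ℝ) • e1 = w := by simp
  -- sums over coordinates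
  have hsum : ∀ (u : ℝ → ℝ) (s t : ℝ),
      ∑ i, u ((w + s • e0 + t • e1) i)
        = u (x + s) + u (x + t) + ((p:ℝ) - 2) * u x := by
    intro u s t
    have h1 : i1 ∈ Finset.univ.erase i0 :=
      Finset.mem_erase.2 ⟨hne.symm, Finset.mem_univ _⟩
    rw [← Finset.add_sum_erase _ _ (Finset.mem_univ i0), ← Finset.add_sum_erase _ _ h1]
    have hcongr : ∀ i ∈ (Finset.univ.erase i0).erase i1,
        u ((w + s • e0 + t • e1) i) = u x := by
      intro i hi
      rcases Finset.mem_erase.1 hi with ⟨hi1, hi0'⟩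
      rcases Finset.mem_erase.1 hi0' with ⟨hi0, _⟩
      rw [hyo s t i hi0 hi1]
    rw [Finset.sum_congr rfl hcongr, Finset.sum_const, hy0, hy1]
    have hcard : ((Finset.univ.erase i0).erase i1).card = p - 2 := by
      rw [Finset.card_erase_of_mem h1, Finset.card_erase_of_mem (Finset.mem_univ _),
        Finset.card_univ, Fintype.card_fin]
      omega
    rw [hcard, nsmul_eq_mul]
    have hc2 : ((p - 2 : ℕ) : ℝ) = (p:ℝ) - 2 := by
      push_cast [Nat.cast_sub hp]; ring
    rw [hc2]; ring
  -- a neighborhood where everything is defined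
  have hwU : w ∈ U := hdiag x hx
  obtain ⟨δ, hδpos, hδ⟩ : ∃ δ > 0, ∀ s t : ℝ, |s| < δ → |t| < δ →
      (w + s • e0 + t • e1) ∈ U ∧ x + s ∈ I ∧ x + t ∈ I := by
    have hV : IsOpen {st : ℝ × ℝ |
        (w + st.1 • e0 + st.2 • e1) ∈ U ∧ x + st.1 ∈ I ∧ x + st.2 ∈ I} := by
      have hc1 : Continuous (fun st : ℝ × ℝ => w + st.1 • e0 + st.2 • e1) :=
        (continuous_const.add (continuous_fst.smul continuous_const)).add
          (continuous_snd.smul continuous_const)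
      have o1 : IsOpen {st : ℝ × ℝ | (w + st.1 • e0 + st.2 • e1) ∈ U} := hU.preimage hc1
      have o2 : IsOpen {st : ℝ × ℝ | x + st.1 ∈ I} :=
        hIopen.preimage (continuous_const.add continuous_fst)
      have o3 : IsOpen {st : ℝ × ℝ | x + st.2 ∈ I} :=
        hIopen.preimage (continuous_const.add continuous_snd)
      exact o1.inter (o2.inter o3)
    have hmem : ((0:ℝ), (0:ℝ)) ∈ {st : ℝ × ℝ |
        (w + st.1 • e0 + st.2 • e1) ∈ U ∧ x + st.1 ∈ I ∧ x + st.2 ∈ I} := by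
      refine ⟨?_, by simpa using hx, by simpa using hx⟩
      simpa using hwU
    rcases Metric.isOpen_iff.1 hV _ hmem with ⟨δ, hδpos, hball⟩
    refine ⟨δ, hδpos, fun s t hs ht => ?_⟩
    have hm : ((s, t) : ℝ × ℝ) ∈ Metric.ball ((0:ℝ), (0:ℝ)) δ := by
      simp only [Metric.mem_ball, Prod.dist_eq, Real.dist_eq, sub_zero, max_lt_iff]
      exact ⟨hs, ht⟩
    exact hball hm
  have h0δ : |(0:ℝ)| < δ := by simpa using hδpos
  -- the key implicit identity
  have hBI : ∀ s t : ℝ, |s| < δ → |t| < δ →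
      B (w + s • e0 + t • e1) ∈ I ∧
      f (B (w + s • e0 + t • e1)) * (g (x + s) + g (x + t) + ((p:ℝ) - 2) * g x)
        = g (B (w + s • e0 + t • e1)) * (f (x + s) + f (x + t) + ((p:ℝ) - 2) * f x) := by
    intro s t hs ht
    have hcoord : ∀ i, (w + s • e0 + t • e1) i ∈ I := by
      intro i
      by_cases h0 : i = i0
      · rw [h0, hy0]; exact (hδ s t hs ht).2.1
      by_cases h1 : i = i1
      · rw [h1, hy1]; exact (hδ s t hs ht).2.2
      · rw [hyo s t i h0 h1]; exact hx
    obtain ⟨hmem, heq⟩ := hB _ hcoord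
    rw [hsum g s t, hsum f s t] at heq
    exact ⟨hmem, heq⟩
  -- B of the diagonal point is x
  have hBw : B w = x := by
    obtain ⟨hmem, heq⟩ := hBI 0 0 h0δ h0δ
    rw [hw00] at hmem heq
    simp only [add_zero] at heq
    have hgBw := hg _ hmem
    have hgx := hg x hx
    have hkey : f (B w) * g x - f x * g (B w) = 0 := by
      have h2 : (p:ℝ) * (f (B w) * g x - f x * g (B w)) = 0 := by linear_combination heq
      rcases mul_eq_zero.1 h2 with h | h
      · exact absurd h (ne_of_gt hp0)
      · exact h
    have hdiv : f (B w) / g (B w) = f x / g x := by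
      rw [div_eq_div_iff (ne_of_gt hgBw) (ne_of_gt hgx)]
      linarith [hkey]
    exact hmono.injOn hmem hx hdiv
  -- differentiability basics
  have hfd : DifferentiableOn ℝ f I := hfC.differentiableOn two_ne_zero
  have hgd : DifferentiableOn ℝ g I := hgC.differentiableOn two_ne_zero
  have hdf : ∀ z ∈ I, HasDerivAt f (deriv f z) z := fun z hz =>
    ((hfd z hz).differentiableAt (hIopen.mem_nhds hz)).hasDerivAt
  have hdg : ∀ z ∈ I, HasDerivAt g (deriv g z) z := fun z hz =>
    ((hgd z hz).differentiableAt (hIopen.mem_nhds hz)).hasDerivAt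
  have hf1 : ContDiffOn ℝ 1 (deriv f) I := hfC.deriv_of_isOpen hIopen (by norm_num)
  have hg1 : ContDiffOn ℝ 1 (deriv g) I := hgC.deriv_of_isOpen hIopen (by norm_num)
  have hddf : HasDerivAt (deriv f) (deriv (deriv f) x) x :=
    ((hf1.differentiableOn one_ne_zero x hx).differentiableAt (hIopen.mem_nhds hx)).hasDerivAt
  have hddg : HasDerivAt (deriv g) (deriv (deriv g) x) x :=
    ((hg1.differentiableOn one_ne_zero x hx).differentiableAt (hIopen.mem_nhds hx)).hasDerivAt
  have hBdiff : ∀ z ∈ U, DifferentiableAt ℝ B z := fun z hz =>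
    (hC2B.differentiableOn two_ne_zero z hz).differentiableAt (hU.mem_nhds hz)
  -- derivatives of the straight lines
  have hline_t : ∀ s t : ℝ, HasDerivAt (fun t' : ℝ => w + s • e0 + t' • e1) e1 t := by
    intro s t
    simpa using ((hasDerivAt_id t).smul_const e1).const_add (w + s • e0)
  have hline_s : ∀ s : ℝ, HasDerivAt (fun s' : ℝ => w + s' • e0 + (0:ℝ) • e1) e0 s := by
    intro s
    simpa using (((hasDerivAt_id s).smul_const e0).const_add w).add_const ((0:ℝ) • e1)
  -- derivative of B along the t-line
  have hht : ∀ s t : ℝ, |s| < δ → |t| < δ →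
      HasDerivAt (fun t' : ℝ => B (w + s • e0 + t' • e1))
        (fderiv ℝ B (w + s • e0 + t • e1) e1) t := by
    intro s t hs ht
    simpa [Function.comp_def] using ((hBdiff _ (hδ s t hs ht).1).hasFDerivAt).comp_hasDerivAt t (hline_t s t)
  have hhs : ∀ s : ℝ, |s| < δ →
      HasDerivAt (fun s' : ℝ => B (w + s' • e0 + (0:ℝ) • e1))
        (fderiv ℝ B (w + s • e0 + (0:ℝ) • e1) e0) s := by
    intro s hs
    simpa [Function.comp_def] using ((hBdiff _ (hδ s 0 hs h0δ).1).hasFDerivAt).comp_hasDerivAt s (hline_s s)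
  have hσ : HasDerivAt (fun s : ℝ => B (w + s • e0 + (0:ℝ) • e1)) (fderiv ℝ B w e0) 0 := by
    have h := hhs 0 h0δ
    rw [hw00] at h; exact h
  -- the derivative of q := s ↦ fderiv B (y s 0) e1
  have hq : HasDerivAt (fun s : ℝ => fderiv ℝ B (w + s • e0 + (0:ℝ) • e1) e1)
      (fderiv ℝ (fun z => fderiv ℝ B z e1) w e0) 0 := by
    have h1 : ContDiffOn ℝ 1 (fderiv ℝ B) U := hC2B.fderiv_of_isOpen hU (by norm_num)
    have h2 : DifferentiableAt ℝ (fderiv ℝ B) w :=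
      (h1.differentiableOn one_ne_zero w hwU).differentiableAt (hU.mem_nhds hwU)
    have hFdiff : DifferentiableAt ℝ (fun z => fderiv ℝ B z e1) w :=
      h2.clm_apply (differentiableAt_const e1)
    have h0 : HasFDerivAt (fun z => fderiv ℝ B z e1)
        (fderiv ℝ (fun z => fderiv ℝ B z e1) w) (w + (0:ℝ) • e0 + (0:ℝ) • e1) := by
      rw [hw00]; exact hFdiff.hasFDerivAt
    simpa [Function.comp_def] using h0.comp_hasDerivAt (0:ℝ) (hline_s 0)
  -- derivative of translates of f and g
  have hfline : HasDerivAt (fun t : ℝ => f (x + t)) (deriv f x) 0 := by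
    have hl : HasDerivAt (fun t : ℝ => x + t) 1 0 := by
      simpa using (hasDerivAt_id (0:ℝ)).const_add x
    have hfx : HasDerivAt f (deriv f x) (x + 0) := by rw [add_zero]; exact hdf x hx
    simpa [Function.comp_def] using hfx.comp (0:ℝ) hl
  have hgline : HasDerivAt (fun t : ℝ => g (x + t)) (deriv g x) 0 := by
    have hl : HasDerivAt (fun t : ℝ => x + t) 1 0 := by
      simpa using (hasDerivAt_id (0:ℝ)).const_add x
    have hgx : HasDerivAt g (deriv g x) (x + 0) := by rw [add_zero]; exact hdg x hx
    simpa [Function.comp_def] using hgx.comp (0:ℝ) hl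
  have hev : ∀ᶠ t in nhds (0:ℝ), |t| < δ := by
    simpa using eventually_abs_sub_lt (0:ℝ) hδpos
  -- Step E : first derivative in t of the identity, at t = 0, for every small s
  have hE : ∀ s : ℝ, |s| < δ →
      deriv f (B (w + s • e0 + (0:ℝ) • e1)) * fderiv ℝ B (w + s • e0 + (0:ℝ) • e1) e1
          * (g (x + s) + ((p:ℝ) - 1) * g x)
        + f (B (w + s • e0 + (0:ℝ) • e1)) * deriv g x
      = deriv g (B (w + s • e0 + (0:ℝ) • e1)) * fderiv ℝ B (w + s • e0 + (0:ℝ) • e1) e1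
          * (f (x + s) + ((p:ℝ) - 1) * f x)
        + g (B (w + s • e0 + (0:ℝ) • e1)) * deriv f x := by
    intro s hs
    have hmemI : B (w + s • e0 + (0:ℝ) • e1) ∈ I := (hBI s 0 hs h0δ).1
    have hBt := hht s 0 hs h0δ
    have hfB : HasDerivAt f (deriv f (B (w + s • e0 + (0:ℝ) • e1)))
        (B (w + s • e0 + (0:ℝ) • e1)) := hdf _ hmemI
    have hgB : HasDerivAt g (deriv g (B (w + s • e0 + (0:ℝ) • e1)))
        (B (w + s • e0 + (0:ℝ) • e1)) := hdg _ hmemI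
    have h1 : HasDerivAt (fun t : ℝ => f (B (w + s • e0 + t • e1)))
        (deriv f (B (w + s • e0 + (0:ℝ) • e1))
          * fderiv ℝ B (w + s • e0 + (0:ℝ) • e1) e1) 0 := by
      simpa [Function.comp_def] using hfB.comp (0:ℝ) hBt
    have h1' : HasDerivAt (fun t : ℝ => g (B (w + s • e0 + t • e1)))
        (deriv g (B (w + s • e0 + (0:ℝ) • e1))
          * fderiv ℝ B (w + s • e0 + (0:ℝ) • e1) e1) 0 := by
      simpa [Function.comp_def] using hgB.comp (0:ℝ) hBt
    have h2 : HasDerivAt (fun t : ℝ => g (x + s) + g (x + t) + ((p:ℝ) - 2) * g x)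
        (deriv g x) 0 := by
      simpa using ((hgline.const_add (g (x + s))).add_const (((p:ℝ) - 2) * g x))
    have h2' : HasDerivAt (fun t : ℝ => f (x + s) + f (x + t) + ((p:ℝ) - 2) * f x)
        (deriv f x) 0 := by
      simpa using ((hfline.const_add (f (x + s))).add_const (((p:ℝ) - 2) * f x))
    have hL := h1.mul h2
    have hR := h1'.mul h2'
    have heq : (fun t : ℝ => f (B (w + s • e0 + t • e1))
          * (g (x + s) + g (x + t) + ((p:ℝ) - 2) * g x))
        =ᶠ[nhds (0:ℝ)] (fun t : ℝ => g (B (w + s • e0 + t • e1))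
          * (f (x + s) + f (x + t) + ((p:ℝ) - 2) * f x)) :=
      hev.mono fun t ht => (hBI s t hs ht).2
    have hDeq := (hL.congr_of_eventuallyEq heq.symm).unique hR
    simp only [add_zero] at hDeq
    linear_combination hDeq
  -- first partials at the origin: both equal 1/p
  have hWne := hW x hx
  have hr1 : fderiv ℝ B w e0 * (p:ℝ) = 1 := by
    have hL : HasDerivAt (fun s : ℝ => f (B (w + s • e0 + (0:ℝ) • e1))
          * (g (x + s) + g (x + 0) + ((p:ℝ) - 2) * g x))
        (deriv f x * fderiv ℝ B w e0 * (g (x + 0) + g (x + 0) + ((p:ℝ) - 2) * g x)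
          + f (B (w + (0:ℝ) • e0 + (0:ℝ) • e1)) * deriv g x) 0 := by
      have hfB : HasDerivAt f (deriv f x) (B (w + (0:ℝ) • e0 + (0:ℝ) • e1)) := by
        rw [hw00, hBw]; exact hdf x hx
      have h1 : HasDerivAt (fun s : ℝ => f (B (w + s • e0 + (0:ℝ) • e1)))
          (deriv f x * fderiv ℝ B w e0) 0 := by
        simpa [Function.comp_def] using hfB.comp (0:ℝ) hσ
      have h2 : HasDerivAt (fun s : ℝ => g (x + s) + g (x + 0) + ((p:ℝ) - 2) * g x)
          (deriv g x) 0 := by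
        simpa using ((hgline.add_const (g (x + 0))).add_const (((p:ℝ) - 2) * g x))
      simpa [Pi.mul_def] using h1.mul h2
    have hR : HasDerivAt (fun s : ℝ => g (B (w + s • e0 + (0:ℝ) • e1))
          * (f (x + s) + f (x + 0) + ((p:ℝ) - 2) * f x))
        (deriv g x * fderiv ℝ B w e0 * (f (x + 0) + f (x + 0) + ((p:ℝ) - 2) * f x)
          + g (B (w + (0:ℝ) • e0 + (0:ℝ) • e1)) * deriv f x) 0 := by
      have hgB : HasDerivAt g (deriv g x) (B (w + (0:ℝ) • e0 + (0:ℝ) • e1)) := by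
        rw [hw00, hBw]; exact hdg x hx
      have h1 : HasDerivAt (fun s : ℝ => g (B (w + s • e0 + (0:ℝ) • e1)))
          (deriv g x * fderiv ℝ B w e0) 0 := by
        simpa [Function.comp_def] using hgB.comp (0:ℝ) hσ
      have h2 : HasDerivAt (fun s : ℝ => f (x + s) + f (x + 0) + ((p:ℝ) - 2) * f x)
          (deriv f x) 0 := by
        simpa using ((hfline.add_const (f (x + 0))).add_const (((p:ℝ) - 2) * f x))
      simpa [Pi.mul_def] using h1.mul h2
    have heq : (fun s : ℝ => f (B (w + s • e0 + (0:ℝ) • e1))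
          * (g (x + s) + g (x + 0) + ((p:ℝ) - 2) * g x))
        =ᶠ[nhds (0:ℝ)] (fun s : ℝ => g (B (w + s • e0 + (0:ℝ) • e1))
          * (f (x + s) + f (x + 0) + ((p:ℝ) - 2) * f x)) :=
      hev.mono fun s hs => (hBI s 0 hs h0δ).2
    have hDeq := (hL.congr_of_eventuallyEq heq.symm).unique hR
    simp only [hw00, hBw, add_zero] at hDeq
    have h3 : fderiv ℝ B w e0 * (p:ℝ) * (g x * deriv f x - f x * deriv g x)
        = 1 * (g x * deriv f x - f x * deriv g x) := by linear_combination hDeq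
    exact mul_right_cancel₀ hWne h3
  have hq1 : fderiv ℝ B w e1 * (p:ℝ) = 1 := by
    have h := hE 0 h0δ
    simp only [hw00, hBw, add_zero] at h
    have h3 : fderiv ℝ B w e1 * (p:ℝ) * (g x * deriv f x - f x * deriv g x)
        = 1 * (g x * deriv f x - f x * deriv g x) := by linear_combination h
    exact mul_right_cancel₀ hWne h3
  -- differentiate hE at s = 0
  have hfBx : HasDerivAt f (deriv f x) (B (w + (0:ℝ) • e0 + (0:ℝ) • e1)) := by
    rw [hw00, hBw]; exact hdf x hx
  have hgBx : HasDerivAt g (deriv g x) (B (w + (0:ℝ) • e0 + (0:ℝ) • e1)) := by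
    rw [hw00, hBw]; exact hdg x hx
  have hddfx : HasDerivAt (deriv f) (deriv (deriv f) x) (B (w + (0:ℝ) • e0 + (0:ℝ) • e1)) := by
    rw [hw00, hBw]; exact hddf
  have hddgx : HasDerivAt (deriv g) (deriv (deriv g) x) (B (w + (0:ℝ) • e0 + (0:ℝ) • e1)) := by
    rw [hw00, hBw]; exact hddg
  have ha : HasDerivAt (fun s : ℝ => deriv f (B (w + s • e0 + (0:ℝ) • e1)))
      (deriv (deriv f) x * fderiv ℝ B w e0) 0 := by
    simpa [Function.comp_def] using hddfx.comp (0:ℝ) hσ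
  have ha' : HasDerivAt (fun s : ℝ => deriv g (B (w + s • e0 + (0:ℝ) • e1)))
      (deriv (deriv g) x * fderiv ℝ B w e0) 0 := by
    simpa [Function.comp_def] using hddgx.comp (0:ℝ) hσ
  have hGs : HasDerivAt (fun s : ℝ => g (x + s) + ((p:ℝ) - 1) * g x) (deriv g x) 0 := by
    simpa using hgline.add_const (((p:ℝ) - 1) * g x)
  have hFs : HasDerivAt (fun s : ℝ => f (x + s) + ((p:ℝ) - 1) * f x) (deriv f x) 0 := by
    simpa using hfline.add_const (((p:ℝ) - 1) * f x)
  have hb : HasDerivAt (fun s : ℝ => f (B (w + s • e0 + (0:ℝ) • e1)))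
      (deriv f x * fderiv ℝ B w e0) 0 := by
    simpa [Function.comp_def] using hfBx.comp (0:ℝ) hσ
  have hb' : HasDerivAt (fun s : ℝ => g (B (w + s • e0 + (0:ℝ) • e1)))
      (deriv g x * fderiv ℝ B w e0) 0 := by
    simpa [Function.comp_def] using hgBx.comp (0:ℝ) hσ
  have hΦ1 := (((ha.mul hq).mul hGs).add (hb.mul_const (deriv g x)))
  have hΦ2 := (((ha'.mul hq).mul hFs).add (hb'.mul_const (deriv f x)))
  have heqE : (fun s : ℝ => deriv f (B (w + s • e0 + (0:ℝ) • e1))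
        * fderiv ℝ B (w + s • e0 + (0:ℝ) • e1) e1 * (g (x + s) + ((p:ℝ) - 1) * g x)
        + f (B (w + s • e0 + (0:ℝ) • e1)) * deriv g x)
      =ᶠ[nhds (0:ℝ)] (fun s : ℝ => deriv g (B (w + s • e0 + (0:ℝ) • e1))
        * fderiv ℝ B (w + s • e0 + (0:ℝ) • e1) e1 * (f (x + s) + ((p:ℝ) - 1) * f x)
        + g (B (w + s • e0 + (0:ℝ) • e1)) * deriv f x) :=
    hev.mono fun s hs => hE s hs
  have hDeq := (hΦ1.congr_of_eventuallyEq heqE.symm).unique hΦ2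
  simp only [hw00, hBw, add_zero, Pi.mul_apply] at hDeq
  -- final algebra
  rw [eq_div_iff hWne]
  linear_combination (-(p:ℝ)) * hDeq
    + (g x * deriv (deriv f) x - f x * deriv (deriv g) x) * (p:ℝ) * fderiv ℝ B w e0 * hq1
    + (g x * deriv (deriv f) x - f x * deriv (deriv g) x) * hr1

/-- the residuum of the Bajraktarević mean B_{f,g} is
(g f″ − f g″)/(g f′ − f g′). -/
theorem residuum_bajraktarevic (p : ℕ) (hp : 2 ≤ p) (I : Set ℝ) (hIopen : IsOpen I)
    (hIconn : I.OrdConnected) (f g : ℝ → ℝ)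
    (hfC : ContDiffOn ℝ 2 f I) (hgC : ContDiffOn ℝ 2 g I)
    (hg : ∀ x ∈ I, 0 < g x)
    (hmono : StrictMonoOn (fun x => f x / g x) I)
    (hW : ∀ x ∈ I, g x * deriv f x - f x * deriv g x ≠ 0)
    (B : (Fin p → ℝ) → ℝ)
    (hB : ∀ y : Fin p → ℝ, (∀ i, y i ∈ I) →
      B y ∈ I ∧ f (B y) * (∑ i, g (y i)) = g (B y) * (∑ i, f (y i)))
    (U : Set (Fin p → ℝ)) (hU : IsOpen U) (hdiag : ∀ x ∈ I, (fun _ => x) ∈ U)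
    (hC2B : ContDiffOn ℝ 2 B U) :
    ∀ x ∈ I,
      -(p : ℝ)^2 * fderiv ℝ (fun z => fderiv ℝ B z (Pi.single (⟨1, hp⟩ : Fin p) 1))
          (fun _ => x) (Pi.single (⟨0, by omega⟩ : Fin p) 1)
      = (g x * deriv (deriv f) x - f x * deriv (deriv g) x)
          / (g x * deriv f x - f x * deriv g x) := by
  intro x hx
  exact bajr_aux p hp I hIopen f g hfC hgC hg hmono hW B hB U hU hdiag hC2B
    ⟨0, by omega⟩ ⟨1, hp⟩ (by simp [Fin.ext_iff]) x hx
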